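/- Let Ω ⊂ ℝ^N (N ≥ 3) be a bounded smooth domain, p = 2* − 1, w ∈ H¹(Ω)∖{0} with ∫_Ω |w|^{2*−2}w = 0, and let p_n ↗ 2*−1. For each n, let c_n = c_{p_n}(w) be the unique constant with ∫_Ω |w+c_n|^{p_n−1}(w+c_n) = 0. Then the sequence (c_n) is bounded, c_n → 0, and ‖w + c_n‖_{L^{p_n+1}(Ω)} → ‖w‖_{L^{2*}(Ω)} as n → ∞. -/

import Mathlib

/-!
The map `c ↦ ∫ |w + c|^(p-1) (w + c)` is strictly increasing, so `c_p(w)` is its unique root.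
For fixed `c`, dominated convergence gives `∫ |w + c|^(p_n-1) (w + c) → ∫ |w + c|^(2*-2) (w + c)`,
and the limit is positive for `c > 0` and negative for `c < 0` because it vanishes at `c = 0`.
Monotonicity then traps the roots: eventually `-ε < c_n < ε`. Once `c_n → 0`, a second use of
dominated convergence, with the bound `|t|^p ≤ 1 + |t|^{2*}`, gives the convergence of the norms.
-/

open MeasureTheory Real Filter Topology
open scoped ENNReal

noncomputable section

abbrev Euc (N : ℕ) := EuclideanSpace ℝ (Fin N)

lemma abs_rpow_sub_one_mul_abs {p : ℝ} (hp : 0 < p) (t : ℝ) : |t| ^ (p - 1) * |t| = |t| ^ p := by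
  rw [← rpow_add_one' (abs_nonneg t) (by linarith), sub_add_cancel]

lemma abs_abs_rpow_sub_one_mul {p : ℝ} (hp : 0 < p) (t : ℝ) : |(|t| ^ (p - 1) * t)| = |t| ^ p := by
  rw [abs_mul, abs_of_nonneg (rpow_nonneg (abs_nonneg t) _), abs_rpow_sub_one_mul_abs hp]

lemma strictMono_abs_rpow_sub_one_mul {p : ℝ} (hp : 0 < p) :
    StrictMono fun t : ℝ => |t| ^ (p - 1) * t := by
  refine strictMono_of_odd_strictMonoOn_nonneg (fun t => by simp only [abs_neg, mul_neg]) ?_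
  refine (strictMonoOn_rpow_Ici_of_exponent_pos hp).congr fun t ht => ?_
  simpa only [abs_of_nonneg (Set.mem_Ici.mp ht)] using (abs_rpow_sub_one_mul_abs hp t).symm

lemma rpow_le_one_add_rpow {s p Q : ℝ} (hs : 0 ≤ s) (hp : 0 ≤ p) (hpQ : p ≤ Q) :
    s ^ p ≤ 1 + s ^ Q := by
  rcases le_total s 1 with h | h
  · linarith [rpow_le_one hs h hp, rpow_nonneg hs Q]
  · linarith [rpow_le_rpow_of_exponent_le h hpQ]

lemma abs_add_rpow_le {t c M p Q : ℝ} (hc : |c| ≤ M) (hp : 0 ≤ p) (hpQ : p ≤ Q) (hQ : 0 ≤ Q) :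
    |t + c| ^ p ≤ 1 + (|t| + M) ^ Q := by
  have hle : |t + c| ≤ |t| + M := (abs_add_le t c).trans (by linarith)
  linarith [rpow_le_one_add_rpow (abs_nonneg (t + c)) hp hpQ,
    rpow_le_rpow (abs_nonneg _) hle hQ]

lemma tendsto_of_monotone_of_map_eq_zero {ι β : Type*} [LinearOrder β] [TopologicalSpace β]
    [OrderTopology β] {l : Filter ι} {G : ι → β → ℝ} {g : β → ℝ} {c : ι → β} {a : β}
    (hG : ∀ i, Monotone (G i)) (hGg : ∀ x, Tendsto (fun i => G i x) l (𝓝 (g x)))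
    (hg_neg : ∀ x < a, g x < 0) (hg_pos : ∀ x, a < x → 0 < g x) (hc : ∀ i, G i (c i) = 0) :
    Tendsto c l (𝓝 a) := by
  refine tendsto_order.2 ⟨fun x hx => ?_, fun x hx => ?_⟩
  · filter_upwards [(hGg x).eventually_lt_const (hg_neg x hx)] with i hi
    by_contra! h
    linarith [hG i h, hc i]
  · filter_upwards [(hGg x).eventually_const_lt (hg_pos x hx)] with i hi
    by_contra! h
    linarith [hG i h, hc i]

section Integrals

variable {α : Type*} [MeasurableSpace α] {μ : Measure α} {w : α → ℝ}

lemma integral_lt_integral_of_forall_lt [NeZero μ] {f g : α → ℝ} (hf : Integrable f μ)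
    (hg : Integrable g μ) (hfg : ∀ x, f x < g x) : ∫ x, f x ∂μ < ∫ x, g x ∂μ := by
  have hsupp : Function.support (fun x => g x - f x) = Set.univ :=
    Set.eq_univ_of_forall fun x => sub_ne_zero.mpr (hfg x).ne'
  have hpos : 0 < ∫ x, g x - f x ∂μ := by
    rw [integral_pos_iff_support_of_nonneg (fun x => sub_nonneg.mpr (hfg x).le) (hg.sub hf),
      hsupp]
    exact pos_iff_ne_zero.mpr (Measure.measure_univ_ne_zero.mpr (NeZero.ne μ))
  rw [integral_sub hg hf] at hpos
  linarith

lemma MeasureTheory.MemLp.integrable_abs_rpow_sub_one_mul {p : ℝ}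
    (hw : MemLp w (ENNReal.ofReal p) μ) (hp : 0 < p) :
    Integrable (fun x => |w x| ^ (p - 1) * w x) μ := by
  refine (hw.integrable_norm_rpow (by simpa using hp) ENNReal.ofReal_ne_top).mono
    ((by fun_prop : Measurable fun t : ℝ => |t| ^ (p - 1) * t).comp_aemeasurable
      hw.1.aemeasurable).aestronglyMeasurable (ae_of_all _ fun x => ?_)
  rw [norm_eq_abs, norm_eq_abs, abs_abs_rpow_sub_one_mul hp, ENNReal.toReal_ofReal hp.le,
    norm_eq_abs, abs_of_nonneg (rpow_nonneg (abs_nonneg _) _)]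

lemma strictMono_integral_abs_add_rpow_sub_one_mul [IsFiniteMeasure μ] [NeZero μ] {p : ℝ}
    (hw : MemLp w (ENNReal.ofReal p) μ) (hp : 0 < p) :
    StrictMono fun c : ℝ => ∫ x, |w x + c| ^ (p - 1) * (w x + c) ∂μ := by
  have hint (c : ℝ) : Integrable (fun x => |w x + c| ^ (p - 1) * (w x + c)) μ :=
    MemLp.integrable_abs_rpow_sub_one_mul (hw.add (memLp_const c)) hp
  exact fun c d hcd => integral_lt_integral_of_forall_lt (hint c) (hint d) fun x =>
    strictMono_abs_rpow_sub_one_mul hp (by gcongr)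

lemma MeasureTheory.MemLp.integrable_one_add_abs_add_rpow [IsFiniteMeasure μ] {Q M : ℝ}
    (hw : MemLp w (ENNReal.ofReal Q) μ) (hQ : 0 < Q) (hM : 0 ≤ M) :
    Integrable (fun x => 1 + (|w x| + M) ^ Q) μ := by
  have h := (hw.norm.add (memLp_const M)).integrable_norm_rpow (by simpa using hQ)
    ENNReal.ofReal_ne_top
  refine (integrable_const 1).add (h.congr (ae_of_all _ fun x => ?_))
  simp [ENNReal.toReal_ofReal hQ.le, abs_of_nonneg (by positivity : 0 ≤ |w x| + M)]

variable [IsFiniteMeasure μ] {ι : Type*} {l : Filter ι} [l.IsCountablyGenerated] {Q : ℝ}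
  {p : ι → ℝ} {p₀ : ℝ}

lemma tendsto_integral_abs_add_rpow_sub_one_mul (hw : MemLp w (ENNReal.ofReal Q) μ)
    (hQ : 0 < Q) (hp : Tendsto p l (𝓝 p₀)) (hpQ : ∀ᶠ i in l, 0 < p i ∧ p i ≤ Q) (c : ℝ) :
    Tendsto (fun i => ∫ x, |w x + c| ^ (p i - 1) * (w x + c) ∂μ) l
      (𝓝 (∫ x, |w x + c| ^ (p₀ - 1) * (w x + c) ∂μ)) := by
  refine tendsto_integral_filter_of_dominated_convergence _
    (Eventually.of_forall fun i => ((by fun_prop : Measurable fun t : ℝ =>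
      |t + c| ^ (p i - 1) * (t + c)).comp_aemeasurable hw.1.aemeasurable).aestronglyMeasurable)
    ?_ (hw.integrable_one_add_abs_add_rpow hQ (abs_nonneg c)) (ae_of_all _ fun x => ?_)
  · filter_upwards [hpQ] with i ⟨hp0, hpQ⟩
    refine ae_of_all _ fun x => ?_
    rw [norm_eq_abs, abs_abs_rpow_sub_one_mul hp0]
    exact abs_add_rpow_le le_rfl hp0.le hpQ hQ.le
  · rcases eq_or_ne (w x + c) 0 with h | h
    · simpa [h] using tendsto_const_nhds
    · exact ((tendsto_const_nhds.rpow (hp.sub_const 1) (Or.inl (abs_ne_zero.mpr h))).mul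
        tendsto_const_nhds)

lemma tendsto_integral_abs_add_rpow (hw : MemLp w (ENNReal.ofReal Q) μ) (hQ : 0 < Q)
    (hp : Tendsto p l (𝓝 p₀)) (hpQ : ∀ᶠ i in l, 0 ≤ p i ∧ p i ≤ Q) (hp₀ : 0 < p₀)
    {c : ι → ℝ} {c₀ : ℝ} (hc : Tendsto c l (𝓝 c₀)) :
    Tendsto (fun i => ∫ x, |w x + c i| ^ p i ∂μ) l (𝓝 (∫ x, |w x + c₀| ^ p₀ ∂μ)) := by
  refine tendsto_integral_filter_of_dominated_convergence _
    (Eventually.of_forall fun i => ((by fun_prop : Measurable fun t : ℝ =>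
      |t + c i| ^ p i).comp_aemeasurable hw.1.aemeasurable).aestronglyMeasurable)
    ?_ (hw.integrable_one_add_abs_add_rpow hQ (by positivity : 0 ≤ |c₀| + 1))
    (ae_of_all _ fun x => ?_)
  · filter_upwards [hpQ, hc.abs.eventually_lt_const (lt_add_one |c₀|)] with i ⟨hp0, hpQ⟩ hci
    refine ae_of_all _ fun x => ?_
    rw [norm_eq_abs, abs_of_nonneg (rpow_nonneg (abs_nonneg _) _)]
    exact abs_add_rpow_le hci.le hp0 hpQ hQ.le
  · exact (tendsto_const_nhds.add hc).abs.rpow hp (Or.inr hp₀)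

end Integrals

theorem translation_constants_tendsto_zero_general
    {N : ℕ} (hN : 3 ≤ N) (Ω : Set (Euc N))
    (hΩpos : 0 < volume Ω) (hΩfin : volume Ω < ⊤)
    (w : Euc N → ℝ)
    (hw : MemLp w (ENNReal.ofReal (2 * (N : ℝ) / ((N : ℝ) - 2))) (volume.restrict Ω))
    (hwcon : (∫ x in Ω, |w x| ^ (2 * (N : ℝ) / ((N : ℝ) - 2) - 2) * w x) = 0)
    (pn : ℕ → ℝ) (hpn : ∀ n, 0 < pn n ∧ pn n < ((N : ℝ) + 2) / ((N : ℝ) - 2))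
    (hlim : Tendsto pn atTop (nhds (((N : ℝ) + 2) / ((N : ℝ) - 2))))
    (c : ℕ → ℝ)
    (hc : ∀ n, (∫ x in Ω, |w x + c n| ^ (pn n - 1) * (w x + c n)) = 0) :
    Bornology.IsBounded (Set.range c) ∧
      Tendsto c atTop (nhds 0) ∧
      Tendsto (fun n => (∫ x in Ω, |w x + c n| ^ (pn n + 1)) ^ (1 / (pn n + 1))) atTop
        (nhds ((∫ x in Ω, |w x| ^ (2 * (N : ℝ) / ((N : ℝ) - 2))) ^
          (((N : ℝ) - 2) / (2 * (N : ℝ))))) := by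
  have : IsFiniteMeasure (volume.restrict Ω) := ⟨by rwa [Measure.restrict_apply_univ]⟩
  have : NeZero (volume.restrict Ω) := ⟨by simpa [← Measure.measure_univ_ne_zero] using hΩpos.ne'⟩
  have hN' : (2 : ℝ) < N := by exact_mod_cast hN
  have hN2 : (N : ℝ) - 2 ≠ 0 := by linarith
  set Q := 2 * (N : ℝ) / ((N : ℝ) - 2) with hQ
  have hcrit : ((N : ℝ) + 2) / ((N : ℝ) - 2) = Q - 1 := by
    rw [hQ]; field_simp; ring
  have hQ2 : 2 < Q := by rw [hQ, lt_div_iff₀ (by linarith)]; linarith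
  rw [hcrit] at hpn hlim
  have hwQ1 : MemLp w (ENNReal.ofReal (Q - 1)) (volume.restrict Ω) :=
    hw.mono_exponent (ENNReal.ofReal_le_ofReal (by linarith))
  have hlimit_strictMono := strictMono_integral_abs_add_rpow_sub_one_mul hwQ1 (by linarith)
  have hroot : ∫ x in Ω, |w x + 0| ^ (Q - 1 - 1) * (w x + 0) = 0 := by
    simpa only [add_zero, sub_sub, one_add_one_eq_two] using hwcon
  have hc0 : Tendsto c atTop (𝓝 0) :=
    tendsto_of_monotone_of_map_eq_zero
      (fun n => (strictMono_integral_abs_add_rpow_sub_one_mul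
        (hw.mono_exponent (ENNReal.ofReal_le_ofReal (by linarith [hpn n]))) (hpn n).1).monotone)
      (tendsto_integral_abs_add_rpow_sub_one_mul hw (by linarith) hlim
        (Eventually.of_forall fun n => ⟨(hpn n).1, by linarith [hpn n]⟩))
      (fun x hx => hroot ▸ hlimit_strictMono hx) (fun x hx => hroot ▸ hlimit_strictMono hx) hc
  refine ⟨Metric.isBounded_range_of_tendsto c hc0, hc0, ?_⟩
  have hexp : Tendsto (fun n => 1 / (pn n + 1)) atTop (𝓝 (((N : ℝ) - 2) / (2 * (N : ℝ)))) := by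
    rw [← one_div_div, ← hQ, ← sub_add_cancel Q 1]
    exact tendsto_const_nhds.div (hlim.add_const 1) (by linarith)
  have hint := tendsto_integral_abs_add_rpow hw (by linarith) (hlim.add_const 1)
    (Eventually.of_forall fun n => ⟨by linarith [hpn n], by linarith [hpn n]⟩) (by linarith) hc0
  simpa only [add_zero, sub_add_cancel] using
    hint.rpow hexp (Or.inr (div_pos (by linarith) (by linarith)))

/-- for `w ∈ H¹(Ω) ⊆ L^{2*}(Ω)` nontrivial with
`∫_Ω |w|^{2*−2}w = 0` and `p_n ↗ 2*−1`, the constants `c_n = c_{p_n}(w)` are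
bounded, converge to `0`, and `‖w + c_n‖_{p_n+1} → ‖w‖_{2*}`. -/
theorem translation_constants_tendsto_zero
    {N : ℕ} (hN : 3 ≤ N) (Ω : Set (Euc N)) (hΩm : MeasurableSet Ω)
    (hΩpos : 0 < volume Ω) (hΩfin : volume Ω < ⊤)
    (w : Euc N → ℝ)
    (hw : MemLp w (ENNReal.ofReal (2 * (N : ℝ) / ((N : ℝ) - 2))) (volume.restrict Ω))
    (hwne : ¬ (∀ᵐ x ∂(volume.restrict Ω), w x = 0))
    (hwcon : (∫ x in Ω, |w x| ^ (2 * (N : ℝ) / ((N : ℝ) - 2) - 2) * w x) = 0)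
    (pn : ℕ → ℝ) (hpn : ∀ n, 0 < pn n ∧ pn n < ((N : ℝ) + 2) / ((N : ℝ) - 2))
    (hmono : Monotone pn)
    (hlim : Tendsto pn atTop (nhds (((N : ℝ) + 2) / ((N : ℝ) - 2))))
    (c : ℕ → ℝ)
    (hc : ∀ n, (∫ x in Ω, |w x + c n| ^ (pn n - 1) * (w x + c n)) = 0) :
    Bornology.IsBounded (Set.range c) ∧
      Tendsto c atTop (nhds 0) ∧
      Tendsto (fun n => (∫ x in Ω, |w x + c n| ^ (pn n + 1)) ^ (1 / (pn n + 1))) atTop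
        (nhds ((∫ x in Ω, |w x| ^ (2 * (N : ℝ) / ((N : ℝ) - 2))) ^
          (((N : ℝ) - 2) / (2 * (N : ℝ))))) :=
  translation_constants_tendsto_zero_general hN Ω hΩpos hΩfin w hw hwcon pn hpn hlim c hc
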